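/- The sylvester congruence ≡_sylv on (ℕ⁺)* is a std-good congruence: it is a std-congruence (for all words u,v, u ≡_sylv v ⟺ std(u) ≡_sylv std(v) and ev(u) = ev(v)) and it is compatible with restriction to alphabet intervals. -/

import Mathlib

open scoped Classical

/-- Words over the positive integers. -/
abbrev Word : Type := List ℕ+

/-- Evaluation of a word: number of occurrences of each letter. -/
def ev (w : Word) : ℕ+ → ℕ := fun a => w.count a

/-- A monoid congruence on the free monoid `(ℕ⁺)*`. -/
def IsCongruence (r : Word → Word → Prop) : Prop :=
  Equivalence r ∧ ∀ u v u' v', r u v → r u' v' → r (u ++ u') (v ++ v')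

/-- Restriction of a word to the letters belonging to a set `I`. -/
noncomputable def restrictTo (I : Set ℕ+) (w : Word) : Word :=
  w.filter fun a => decide (a ∈ I)

/-- `I` is an interval (order-convex subset) of `ℕ⁺`. -/
def IsIntervalSet (I : Set ℕ+) : Prop :=
  ∀ ⦃a b c : ℕ+⦄, a ∈ I → c ∈ I → a ≤ b → b ≤ c → b ∈ I

/-- Compatibility with restriction to alphabet intervals. -/
def CompatRestrict (r : Word → Word → Prop) : Prop :=
  ∀ I : Set ℕ+, IsIntervalSet I → ∀ u v, r u v → r (restrictTo I u) (restrictTo I v)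

/-- `r` is a `φ`-congruence. -/
def IsPhiCongruence (φ : Word → Word) (r : Word → Word → Prop) : Prop :=
  ∀ u v, r u v ↔ (r (φ u) (φ v) ∧ ev u = ev v)

/-- Standardization. -/
def std (w : Word) : Word :=
  (List.range w.length).map fun i =>
    ⟨((List.range w.length).countP fun j =>
        decide (w.getD j 1 < w.getD i 1 ∨ (w.getD j 1 = w.getD i 1 ∧ j < i))) + 1,
      Nat.succ_pos _⟩

/-- Packing. -/
def pack (w : Word) : Word :=
  w.map fun a => ⟨(w.dedup.countP fun b => decide (b < a)) + 1, Nat.succ_pos _⟩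

theorem parkBad_ex (w : Word) :
    ∃ d : ℕ, 1 ≤ d ∧ (w.countP fun a : ℕ+ => decide ((a : ℕ) ≤ d)) < d :=
  ⟨w.length + 1, Nat.succ_le_succ (Nat.zero_le _), by
    have h : (w.countP fun a : ℕ+ => decide ((a : ℕ) ≤ w.length + 1)) ≤ w.length :=
      List.countP_le_length
    omega⟩

/-- The smallest `d ≥ 1` such that fewer than `d` letters of `w` are `≤ d`. -/
noncomputable def parkBad (w : Word) : ℕ := Nat.find (parkBad_ex w)

/-- One pass of the parkization procedure, with fuel. -/
noncomputable def parkAux : ℕ → Word → Word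
  | 0, w => w
  | f + 1, w =>
    if parkBad w ≤ w.length then
      parkAux f (w.map fun a : ℕ+ => if parkBad w < (a : ℕ) then (a - 1 : ℕ+) else a)
    else w

/-- Parkization. The fuel `(sum of the letters)` always suffices,
since every pass strictly decreases the sum of the letters. -/
noncomputable def park (w : Word) : Word := parkAux (w.map fun a => (a : ℕ)).sum w

/-- Smallest monoid congruence containing `base`. -/
def CongClosure (base : Word → Word → Prop) (u v : Word) : Prop :=
  ∀ r : Word → Word → Prop, IsCongruence r → (∀ x y, base x y → r x y) → r u v

def sylvBase (x y : Word) : Prop :=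
  ∃ (a b c : ℕ+) (v : Word), a ≤ b ∧ b < c ∧
    x = a :: c :: (v ++ [b]) ∧ y = c :: a :: (v ++ [b])

/-- The sylvester congruence. -/
def sylv : Word → Word → Prop := CongClosure sylvBase

def stalBase (x y : Word) : Prop :=
  ∃ (a b : ℕ+) (v : Word), x = b :: a :: (v ++ [b]) ∧ y = a :: b :: (v ++ [b])

/-- The stalactic congruence. -/
def stal : Word → Word → Prop := CongClosure stalBase

def sylvSharpBase (x y : Word) : Prop :=
  ∃ (a b c : ℕ+) (v : Word), a < b ∧ b ≤ c ∧
    x = b :: (v ++ [a, c]) ∧ y = b :: (v ++ [c, a])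

/-- The #-sylvester congruence. -/
def sylvSharp : Word → Word → Prop := CongClosure sylvSharpBase

/-- The taïga congruence: join of the sylvester and stalactic congruences. -/
def taiga : Word → Word → Prop := CongClosure fun u v => sylv u v ∨ stal u v

/-- Planar binary trees with letter labels. -/
inductive BT : Type where
  | leaf : BT
  | node : BT → ℕ+ → BT → BT
deriving DecidableEq

/-- Binary search tree insertion of a letter. -/
def BT.insert : BT → ℕ+ → BT
  | .leaf, l => .node .leaf l .leaf
  | .node L b R, l => if l ≤ b then .node (L.insert l) b R else .node L b (R.insert l)

/-- Binary search tree of a word: insert the letters from right to left. -/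
def bst (w : Word) : BT := w.foldr (fun l t => t.insert l) .leaf

/-- Planar binary trees labelled by a letter and a multiplicity. -/
inductive BSTM : Type where
  | leaf : BSTM
  | node : BSTM → ℕ+ → ℕ+ → BSTM → BSTM   -- left, letter, multiplicity, right
deriving DecidableEq

/-- Insertion of a letter into a binary search tree with multiplicities. -/
def BSTM.insert : BSTM → ℕ+ → BSTM
  | .leaf, l => .node .leaf l 1 .leaf
  | .node L l' k R, l =>
    if l = l' then .node L l' (k + 1) R
    else if l < l' then .node (L.insert l) l' k R
    else .node L l' k (R.insert l)

/-- The `P`-symbol: insert the letters of `w` from right to left. -/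
def Pmap (w : Word) : BSTM := w.foldr (fun l t => t.insert l) .leaf

/-- Letters of a BSTM in left-to-right (infix) order. -/
def BSTM.letters : BSTM → List ℕ+
  | .leaf => []
  | .node L l _ R => L.letters ++ l :: R.letters

/-- The binary search tree property for a BSTM. -/
def BSTM.IsSearchTree : BSTM → Prop
  | .leaf => True
  | .node L l _ R =>
      (∀ x ∈ L.letters, x < l) ∧ (∀ x ∈ R.letters, l < x) ∧
        L.IsSearchTree ∧ R.IsSearchTree

/-- Total multiplicity of a letter in a BSTM. -/
def BSTM.mult : BSTM → ℕ+ → ℕ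
  | .leaf, _ => 0
  | .node L l k R, a => L.mult a + (if a = l then (k : ℕ) else 0) + R.mult a

/-- Size of a BSTM: sum of the multiplicities. -/
def BSTM.size : BSTM → ℕ
  | .leaf => 0
  | .node L _ k R => L.size + (k : ℕ) + R.size

/-- Planar binary trees with multiplicities. -/
inductive BTM : Type where
  | leaf : BTM
  | node : BTM → ℕ+ → BTM → BTM
deriving DecidableEq

/-- Size of a BTM: sum of the multiplicities. -/
def BTM.size : BTM → ℕ
  | .leaf => 0
  | .node L k R => L.size + (k : ℕ) + R.size

/-- Number of nodes of a BTM. -/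
def BTM.numNodes : BTM → ℕ
  | .leaf => 0
  | .node L _ R => L.numNodes + 1 + R.numNodes

/-- Forgetting the letters of a BSTM gives a BTM. -/
def forgetLetters : BSTM → BTM
  | .leaf => .leaf
  | .node L _ k R => .node (forgetLetters L) k (forgetLetters R)

/-- The `B`-symbol: the BTM underlying `P(w)`. -/
def Bmap (w : Word) : BTM := forgetLetters (Pmap w)

/-- A packed word: its set of letters is `{1, …, k}` for some `k`. -/
def IsPacked (w : Word) : Prop := ∀ a ∈ w, ∀ b : ℕ+, b ≤ a → b ∈ w

/-- Number of packed words inserting to the BTM `T`. -/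
noncomputable def fT (T : BTM) : ℕ :=
  Set.ncard {w : Word | IsPacked w ∧ Bmap w = T}

/-- The hook-type product over the subtrees of a BTM. -/
def hookProd : BTM → ℕ
  | .leaf => 1
  | .node L k R =>
      (BTM.node L k R).size * ((k : ℕ) - 1).factorial * hookProd L * hookProd R

/-- Label the nodes of a BTM in infix order starting from a given letter;
returns the labelled tree and the next unused letter. -/
def infixLabelAux : BTM → ℕ+ → BSTM × ℕ+
  | .leaf, n => (.leaf, n)
  | .node L k R, n =>
    let p := infixLabelAux L n
    let q := infixLabelAux R (p.2 + 1)
    (.node p.1 p.2 k q.1, q.2)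

/-- Label the nodes of a BTM by `1, …, k` in infix order. -/
def infixLabel (T : BTM) : BSTM := (infixLabelAux T 1).1


/-! A sylvester move swaps two adjacent letters `a ≠ c` when some later letter `b` satisfies
`min a c ≤ b < max a c`; the congruence is the equivalence closure of these moves. Whether a move
is allowed depends only on the relative order of the three positions in the order "by letter,
then by position", which is exactly the order that `std` records; and swapping two adjacent
unequal letters commutes with `std`. Hence moves of `u` and of `std u` correspond, which gives
`u ≡ v → std u ≡ std v` and lets every path out of `std u` be lifted to a path out of `u`.
A word is recovered from its standardization and its evaluation, which closes the converse.
Moves permute letters, so they keep the evaluation, and restricted to an interval a move either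
survives (if `a` and `c` do, so does `b`) or becomes trivial. -/

open Relation Finset

section CongClosure

variable {base : Word → Word → Prop}

theorem isCongruence_congClosure (base : Word → Word → Prop) :
    IsCongruence (CongClosure base) :=
  ⟨⟨fun u _ hr _ => hr.1.refl u,
    fun h r hr hb => hr.1.symm (h r hr hb),
    fun h₁ h₂ r hr hb => hr.1.trans (h₁ r hr hb) (h₂ r hr hb)⟩,
   fun _ _ _ _ h₁ h₂ r hr hb => hr.2 _ _ _ _ (h₁ r hr hb) (h₂ r hr hb)⟩

theorem congClosure_of_base {x y : Word} (h : base x y) : CongClosure base x y :=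
  fun _ _ hb => hb x y h

theorem IsCongruence.comap {r : Word → Word → Prop} (hr : IsCongruence r) {f : Word → Word}
    (hf : ∀ u v, f (u ++ v) = f u ++ f v) : IsCongruence fun u v => r (f u) (f v) :=
  ⟨⟨fun u => hr.1.refl (f u), hr.1.symm, hr.1.trans⟩,
   fun u v u' v' h h' => by simpa only [hf] using hr.2 _ _ _ _ h h'⟩

def ContextStep (base : Word → Word → Prop) (u v : Word) : Prop :=
  ∃ p x y s, base x y ∧ u = p ++ x ++ s ∧ v = p ++ y ++ s

theorem ContextStep.context {u v : Word} (h : ContextStep base u v) (p s : Word) :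
    ContextStep base (p ++ u ++ s) (p ++ v ++ s) := by
  obtain ⟨q, x, y, t, hxy, rfl, rfl⟩ := h
  exact ⟨p ++ q, x, y, t ++ s, hxy, by simp, by simp⟩

theorem isCongruence_reflTransGen_symmGen_contextStep (base : Word → Word → Prop) :
    IsCongruence (ReflTransGen (SymmGen (ContextStep base))) := by
  have context : ∀ p s, ∀ ⦃u v⦄, ReflTransGen (SymmGen (ContextStep base)) u v →
      ReflTransGen (SymmGen (ContextStep base)) (p ++ u ++ s) (p ++ v ++ s) := fun p s =>
    ReflTransGen.lift (fun w => p ++ w ++ s) fun _ _ h =>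
      h.elim (fun h => .of_rel (h.context p s)) (fun h => .of_rel_symm (h.context p s))
  refine ⟨⟨fun _ => .refl, fun h => Std.Symm.symm _ _ h, .trans⟩, fun u v u' v' h h' => ?_⟩
  have h₁ := context [] u' h
  have h₂ := context v [] h'
  simp only [List.nil_append, List.append_nil] at h₁ h₂
  exact h₁.trans h₂

theorem congClosure_iff_reflTransGen {u v : Word} :
    CongClosure base u v ↔ ReflTransGen (SymmGen (ContextStep base)) u v := by
  refine ⟨fun h => h _ (isCongruence_reflTransGen_symmGen_contextStep base)
    fun x y hxy => .single (.of_rel ⟨[], x, y, [], hxy, by simp, by simp⟩), fun h => ?_⟩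
  have hc := isCongruence_congClosure base
  have step : ∀ {u v}, ContextStep base u v → CongClosure base u v := by
    rintro _ _ ⟨p, x, y, s, hxy, rfl, rfl⟩
    exact hc.2 _ _ _ _ (hc.2 _ _ _ _ (hc.1.refl p) (congClosure_of_base hxy)) (hc.1.refl s)
  induction h with
  | refl => exact hc.1.refl u
  | tail _ h ih => exact hc.1.trans ih (h.elim step fun h => hc.1.symm (step h))

end CongClosure

theorem Relation.ReflTransGen.exists_lift {α β : Type*} {r : α → α → Prop} {s : β → β → Prop}
    (f : α → β) (hlift : ∀ a b, s (f a) b → ∃ a', r a a' ∧ f a' = b) {a : α} {b : β}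
    (h : ReflTransGen s (f a) b) : ∃ a', ReflTransGen r a a' ∧ f a' = b := by
  induction h with
  | refl => exact ⟨a, .refl, rfl⟩
  | tail _ hs ih =>
    obtain ⟨a₁, h₁, rfl⟩ := ih
    obtain ⟨a₂, h₂, rfl⟩ := hlift _ _ hs
    exact ⟨a₂, h₁.tail h₂, rfl⟩

theorem sylvBase_perm {x y : Word} (h : sylvBase x y) : x.Perm y := by
  obtain ⟨a, b, c, v, -, -, rfl, rfl⟩ := h
  exact .swap c a _

theorem sylv.perm {u v : Word} (h : sylv u v) : u.Perm v :=
  h _ ⟨⟨List.Perm.refl, List.Perm.symm, List.Perm.trans⟩, fun _ _ _ _ => List.Perm.append⟩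
    fun _ _ => sylvBase_perm

theorem sylv.ev_eq {u v : Word} (h : sylv u v) : ev u = ev v :=
  funext h.perm.count_eq

theorem restrictTo_append (I : Set ℕ+) (u v : Word) :
    restrictTo I (u ++ v) = restrictTo I u ++ restrictTo I v :=
  List.filter_append ..

theorem sylvBase_restrictTo {I : Set ℕ+} (hI : IsIntervalSet I) {x y : Word}
    (h : sylvBase x y) : sylv (restrictTo I x) (restrictTo I y) := by
  obtain ⟨a, b, c, v, hab, hbc, rfl, rfl⟩ := h
  by_cases hac : a ∈ I ∧ c ∈ I
  · have hb : b ∈ I := hI hac.1 hac.2 hab hbc.le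
    refine congClosure_of_base ⟨a, b, c, restrictTo I v, hab, hbc, ?_, ?_⟩ <;>
      simp [restrictTo, hac.1, hac.2, hb]
  · have : restrictTo I (a :: c :: (v ++ [b])) = restrictTo I (c :: a :: (v ++ [b])) := by
      by_cases ha : a ∈ I <;> by_cases hc : c ∈ I <;> simp_all [restrictTo]
    rw [this]
    exact (isCongruence_congClosure _).1.refl _

theorem sylv.restrictTo {I : Set ℕ+} (hI : IsIntervalSet I) {u v : Word} (h : sylv u v) :
    sylv (restrictTo I u) (restrictTo I v) :=
  h _ ((isCongruence_congClosure _).comap (restrictTo_append I)) fun _ _ =>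
    sylvBase_restrictTo hI

section Standardization

/-- Out of range this is the junk value `1`, as in `std`. -/
def letter (w : Word) (i : ℕ) : ℕ+ := w.getD i 1

/-- `std` numbers the positions of `w` in increasing order of this key. -/
def stdKey (w : Word) (i : ℕ) : Lex (ℕ+ × ℕ) := toLex (letter w i, i)

def stdRank (w : Word) (i : ℕ) : ℕ := #{j ∈ range w.length | stdKey w j < stdKey w i}

variable {w : Word} {i j : ℕ}

theorem ext_letter {u v : Word} (hlen : u.length = v.length)
    (h : ∀ k < u.length, letter u k = letter v k) : u = v :=
  List.ext_getElem hlen fun k hu hv => by simpa [letter, hu, hv] using h k hu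

theorem std_eq_map_stdRank (w : Word) :
    std w = (List.range w.length).map fun i => (stdRank w i).succPNat := by
  refine List.map_congr_left fun i _ => PNat.eq ?_
  simp only [Nat.succPNat_coe, Nat.succ_eq_add_one, stdRank, ← Nat.count_eq_card_filter_range,
    Nat.count, stdKey, Prod.Lex.toLex_lt_toLex, letter]
  rfl

@[simp] theorem length_std (w : Word) : (std w).length = w.length := by
  simp [std_eq_map_stdRank]

theorem letter_std (hi : i < w.length) : letter (std w) i = (stdRank w i).succPNat := by
  simp [letter, std_eq_map_stdRank, hi]

theorem stdKey_injective (w : Word) : Function.Injective (stdKey w) :=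
  fun _ _ h => congrArg Prod.snd (toLex.injective h)

theorem stdRank_le_stdRank (h : stdKey w i ≤ stdKey w j) : stdRank w i ≤ stdRank w j :=
  card_le_card <| monotone_filter_right _ fun _ _ hk => hk.trans_le h

theorem stdRank_lt_stdRank (hi : i < w.length) (h : stdKey w i < stdKey w j) :
    stdRank w i < stdRank w j := by
  refine card_lt_card ⟨monotone_filter_right _ fun _ _ hk => hk.trans h, fun hsub => ?_⟩
  have : i ∈ {k ∈ range w.length | stdKey w k < stdKey w j} := by simp [hi, h]
  exact lt_irrefl _ (mem_filter.1 (hsub this)).2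

theorem stdRank_lt_stdRank_iff (hi : i < w.length) :
    stdRank w i < stdRank w j ↔ stdKey w i < stdKey w j :=
  ⟨fun h => lt_of_not_ge fun h' => (stdRank_le_stdRank h').not_gt h, stdRank_lt_stdRank hi⟩

theorem stdRank_injOn (hi : i < w.length) (hj : j < w.length)
    (h : stdRank w i = stdRank w j) : i = j := by
  by_contra hne
  rcases ((stdKey_injective w).ne hne).lt_or_gt with hlt | hlt
  · exact (stdRank_lt_stdRank hi hlt).ne h
  · exact (stdRank_lt_stdRank hj hlt).ne' h

theorem stdKey_std_lt_iff (hi : i < w.length) (hj : j < w.length) :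
    stdKey (std w) i < stdKey (std w) j ↔ stdKey w i < stdKey w j := by
  rw [← stdRank_lt_stdRank_iff hi, stdKey, stdKey, Prod.Lex.toLex_lt_toLex, letter_std hi,
    letter_std hj, Nat.succPNat_lt_succPNat, Nat.succPNat_inj]
  refine ⟨fun h => h.elim id fun ⟨h, hij⟩ => ?_, .inl⟩
  exact absurd (stdRank_injOn hi hj h) hij.ne

theorem letter_le_iff_stdKey_lt (h : i < j) :
    letter w i ≤ letter w j ↔ stdKey w i < stdKey w j := by
  simp [stdKey, Prod.Lex.toLex_lt_toLex, h, le_iff_lt_or_eq]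

theorem letter_lt_iff_stdKey_lt (h : j < i) :
    letter w i < letter w j ↔ stdKey w i < stdKey w j := by
  simp [stdKey, Prod.Lex.toLex_lt_toLex, h.not_gt]

theorem letter_std_le_iff (h : i < j) (hj : j < w.length) :
    letter (std w) i ≤ letter (std w) j ↔ letter w i ≤ letter w j := by
  rw [letter_le_iff_stdKey_lt h, letter_le_iff_stdKey_lt h, stdKey_std_lt_iff (h.trans hj) hj]

theorem letter_std_lt_iff (h : j < i) (hi : i < w.length) :
    letter (std w) i < letter (std w) j ↔ letter w i < letter w j := by
  rw [letter_lt_iff_stdKey_lt h, letter_lt_iff_stdKey_lt h, stdKey_std_lt_iff hi (h.trans hi)]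

theorem map_letter_range (w : Word) : (List.range w.length).map (letter w) = w :=
  List.ext_getElem (by simp) fun i _ hi => by simp [letter, hi]

theorem card_filter_letter (w : Word) (p : ℕ+ → Prop) [DecidablePred p] :
    #{j ∈ range w.length | p (letter w j)} = w.countP fun a => decide (p a) := by
  rw [← Nat.count_eq_card_filter_range, Nat.count]
  conv_rhs => rw [← map_letter_range w]
  rw [List.countP_map]
  rfl

theorem countP_lt_letter_le_stdRank (w : Word) (i : ℕ) :
    (w.countP fun a => a < letter w i) ≤ stdRank w i := by
  rw [← card_filter_letter]
  exact card_le_card <| monotone_filter_right _ fun _ _ h =>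
    Prod.Lex.toLex_lt_toLex.2 (.inl h)

theorem stdRank_lt_countP_le_letter (hi : i < w.length) :
    stdRank w i < w.countP fun a => a ≤ letter w i := by
  rw [← card_filter_letter]
  refine card_lt_card ⟨monotone_filter_right _ fun _ _ h => ?_, fun hsub => ?_⟩
  · rcases Prod.Lex.toLex_lt_toLex.1 h with h | ⟨h, -⟩
    exacts [h.le, h.le]
  · have : i ∈ {j ∈ range w.length | letter w j ≤ letter w i} := by simp [hi]
    exact lt_irrefl _ (mem_filter.1 (hsub this)).2

theorem letter_le_letter_of_stdRank_le {u v : Word} (huv : u.Perm v) (hi : i < v.length)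
    (h : stdRank u i ≤ stdRank v i) : letter u i ≤ letter v i := by
  by_contra! hlt
  refine h.not_gt ?_
  calc stdRank v i < v.countP (· ≤ letter v i) := stdRank_lt_countP_le_letter hi
    _ = u.countP (· ≤ letter v i) := (huv.countP_eq _).symm
    _ ≤ u.countP (· < letter u i) :=
      List.countP_mono_left fun a _ ha => by simpa using (of_decide_eq_true ha).trans_lt hlt
    _ ≤ stdRank u i := countP_lt_letter_le_stdRank u i

theorem std_injective_of_ev_eq {u v : Word} (hstd : std u = std v) (hev : ev u = ev v) :
    u = v := by
  have huv : u.Perm v := List.perm_iff_count.2 (congrFun hev)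
  refine ext_letter huv.length_eq fun i hu => ?_
  have hv : i < v.length := huv.length_eq ▸ hu
  have hrank : stdRank u i = stdRank v i := by
    simpa [letter_std hu, letter_std hv] using congrArg (letter · i) hstd
  exact le_antisymm (letter_le_letter_of_stdRank_le huv hv hrank.le)
    (letter_le_letter_of_stdRank_le huv.symm hu hrank.ge)

def permute (w : Word) (σ : Equiv.Perm ℕ) : Word :=
  (List.range w.length).map fun k => letter w (σ k)

@[simp] theorem length_permute (w : Word) (σ : Equiv.Perm ℕ) :
    (permute w σ).length = w.length := by
  simp [permute]

theorem letter_permute {σ : Equiv.Perm ℕ} (hσ : ∀ k, σ k < w.length ↔ k < w.length) (k : ℕ) :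
    letter (permute w σ) k = letter w (σ k) := by
  by_cases hk : k < w.length
  · simp [permute, letter, hk]
  · have : ¬σ k < w.length := by rwa [hσ]
    simp [permute, letter, hk, this]

theorem std_permute {σ : Equiv.Perm ℕ} (hσ : ∀ k, σ k < w.length ↔ k < w.length)
    (hstable : ∀ j k, j < w.length → k < w.length →
      letter w (σ j) = letter w (σ k) → (σ j < σ k ↔ j < k)) :
    std (permute w σ) = permute (std w) σ := by
  have key : ∀ j k, j < w.length → k < w.length →
      (stdKey (permute w σ) j < stdKey (permute w σ) k ↔ stdKey w (σ j) < stdKey w (σ k)) := by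
    intro j k hj hk
    simp only [stdKey, Prod.Lex.toLex_lt_toLex, letter_permute hσ]
    exact or_congr_right <| and_congr_right fun h => (hstable j k hj hk h).symm
  rw [std_eq_map_stdRank, length_permute, permute.eq_1 (std w), length_std]
  refine List.map_congr_left fun k hk => ?_
  have hk : k < w.length := List.mem_range.1 hk
  rw [letter_std ((hσ k).2 hk), stdRank, stdRank, length_permute]
  congr 1
  refine card_equiv σ fun j => ?_
  simp only [mem_filter, mem_range, hσ]
  exact and_congr_right fun hj => key j k hj hk

theorem swap_lt_iff (hi : i + 1 < w.length) (k : ℕ) :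
    Equiv.swap i (i + 1) k < w.length ↔ k < w.length := by
  rw [Equiv.swap_apply_def]
  split_ifs <;> omega

theorem std_permute_swap (hi : i + 1 < w.length) (hne : letter w i ≠ letter w (i + 1)) :
    std (permute w (Equiv.swap i (i + 1))) = permute (std w) (Equiv.swap i (i + 1)) := by
  refine std_permute (swap_lt_iff hi) fun j k _ _ heq => ?_
  simp only [Equiv.swap_apply_def] at heq ⊢
  split_ifs at heq ⊢ <;> first | omega | (subst_vars; simp_all)

end Standardization

section SylvesterMoves

theorem List.exists_eq_append_cons_of_lt {α : Type*} {l : List α} {k : ℕ} (hk : k < l.length) :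
    ∃ p a s, l = p ++ a :: s ∧ p.length = k :=
  ⟨l.take k, l[k], l.drop (k + 1), by simp, by simp; omega⟩

theorem letter_append_of_lt {p : Word} (t : Word) {k : ℕ} (hk : k < p.length) :
    letter (p ++ t) k = letter p k :=
  List.getD_append p t 1 k hk

theorem letter_append_add (p t : Word) (k : ℕ) :
    letter (p ++ t) (p.length + k) = letter t k := by
  simp [letter, List.getElem?_append_right]

theorem permute_swap_append (p t : Word) (a c : ℕ+) :
    permute (p ++ a :: c :: t) (Equiv.swap p.length (p.length + 1)) = p ++ c :: a :: t := by
  refine ext_letter (by simp) fun k _ => ?_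
  rw [letter_permute (swap_lt_iff (by simp))]
  rcases lt_or_ge k p.length with hk | hk
  · rw [Equiv.swap_apply_of_ne_of_ne (by omega) (by omega), letter_append_of_lt _ hk,
      letter_append_of_lt _ hk]
  · obtain ⟨j, rfl⟩ := Nat.exists_eq_add_of_le hk
    rcases j with _ | _ | j
    · simp [letter]
    · simp [letter]
    · rw [Equiv.swap_apply_of_ne_of_ne (by omega) (by omega), letter_append_add,
        letter_append_add]
      rfl

/-- The move `a c ⋯ b ↔ c a ⋯ b` of the sylvester congruence, in either direction, with `a c`
at positions `i, i + 1` and `b` at position `pb`. -/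
def IsSylvMove (w : Word) (i pb : ℕ) : Prop :=
  i + 1 < pb ∧ pb < w.length ∧
    (letter w i ≤ letter w pb ∧ letter w pb < letter w (i + 1) ∨
      letter w (i + 1) ≤ letter w pb ∧ letter w pb < letter w i)

variable {w : Word} {i pb : ℕ}

theorem IsSylvMove.succ_lt_length (h : IsSylvMove w i pb) : i + 1 < w.length :=
  h.1.trans h.2.1

theorem IsSylvMove.letter_ne (h : IsSylvMove w i pb) : letter w i ≠ letter w (i + 1) := by
  rcases h.2.2 with h | h
  exacts [(h.1.trans_lt h.2).ne, (h.1.trans_lt h.2).ne']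

theorem isSylvMove_std_iff : IsSylvMove (std w) i pb ↔ IsSylvMove w i pb := by
  refine and_congr_right fun hi => ?_
  rw [length_std]
  refine and_congr_right fun hpb => ?_
  rw [letter_std_le_iff (by omega) hpb, letter_std_lt_iff (by omega) hpb,
    letter_std_le_iff (by omega) hpb, letter_std_lt_iff (by omega) hpb]

theorem isSylvMove_append_iff (p m s : Word) (a c b : ℕ+) :
    IsSylvMove (p ++ a :: c :: (m ++ b :: s)) p.length (p.length + (m.length + 2)) ↔
      a ≤ b ∧ b < c ∨ c ≤ b ∧ b < a := by
  simp [IsSylvMove, letter]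

theorem exists_eq_append_cons_cons_append_cons (hi : i + 1 < pb) (hpb : pb < w.length) :
    ∃ p a c m b s, w = p ++ a :: c :: (m ++ b :: s) ∧ i = p.length ∧
      pb = p.length + (m.length + 2) := by
  obtain ⟨p, a, t, rfl, rfl⟩ := List.exists_eq_append_cons_of_lt (l := w) (k := i) (by omega)
  obtain _ | ⟨c, t⟩ := t
  · simp at hpb; omega
  obtain ⟨m, b, s, rfl, hm⟩ :=
    List.exists_eq_append_cons_of_lt (l := t) (k := pb - p.length - 2) (by simp at hpb; omega)
  exact ⟨p, a, c, m, b, s, rfl, rfl, by omega⟩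

theorem contextStep_sylvBase_iff {u v : Word} :
    ContextStep sylvBase u v ↔ ∃ p a b c m s, a ≤ b ∧ b < c ∧
      u = p ++ a :: c :: (m ++ b :: s) ∧ v = p ++ c :: a :: (m ++ b :: s) := by
  constructor
  · rintro ⟨p, _, _, s, ⟨a, b, c, m, hab, hbc, rfl, rfl⟩, rfl, rfl⟩
    exact ⟨p, a, b, c, m, s, hab, hbc, by simp, by simp⟩
  · rintro ⟨p, a, b, c, m, s, hab, hbc, rfl, rfl⟩
    exact ⟨p, _, _, s, ⟨a, b, c, m, hab, hbc, rfl, rfl⟩, by simp, by simp⟩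

theorem symmGen_contextStep_sylvBase_iff {u v : Word} :
    SymmGen (ContextStep sylvBase) u v ↔
      ∃ i pb, IsSylvMove u i pb ∧ v = permute u (Equiv.swap i (i + 1)) := by
  constructor
  · rintro (h | h) <;> obtain ⟨p, a, b, c, m, s, hab, hbc, rfl, rfl⟩ := contextStep_sylvBase_iff.1 h
    · exact ⟨_, _, (isSylvMove_append_iff p m s a c b).2 (.inl ⟨hab, hbc⟩),
        (permute_swap_append _ _ _ _).symm⟩
    · exact ⟨_, _, (isSylvMove_append_iff p m s c a b).2 (.inr ⟨hab, hbc⟩),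
        (permute_swap_append _ _ _ _).symm⟩
  · rintro ⟨i, pb, hmove, rfl⟩
    obtain ⟨p, a, c, m, b, s, rfl, rfl, rfl⟩ :=
      exists_eq_append_cons_cons_append_cons hmove.1 hmove.2.1
    rw [permute_swap_append]
    rcases (isSylvMove_append_iff p m s a c b).1 hmove with ⟨hab, hbc⟩ | ⟨hcb, hba⟩
    · exact .of_rel (contextStep_sylvBase_iff.2 ⟨p, a, b, c, m, s, hab, hbc, rfl, rfl⟩)
    · exact .of_rel_symm (contextStep_sylvBase_iff.2 ⟨p, c, b, a, m, s, hcb, hba, rfl, rfl⟩)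

theorem symmGen_contextStep_sylvBase_std {u v : Word}
    (h : SymmGen (ContextStep sylvBase) u v) :
    SymmGen (ContextStep sylvBase) (std u) (std v) := by
  obtain ⟨i, pb, hmove, rfl⟩ := symmGen_contextStep_sylvBase_iff.1 h
  rw [std_permute_swap hmove.succ_lt_length hmove.letter_ne]
  exact symmGen_contextStep_sylvBase_iff.2 ⟨i, pb, isSylvMove_std_iff.2 hmove, rfl⟩

theorem exists_symmGen_contextStep_sylvBase_std_eq {u w : Word}
    (h : SymmGen (ContextStep sylvBase) (std u) w) :
    ∃ v, SymmGen (ContextStep sylvBase) u v ∧ std v = w := by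
  obtain ⟨i, pb, hmove, rfl⟩ := symmGen_contextStep_sylvBase_iff.1 h
  rw [isSylvMove_std_iff] at hmove
  exact ⟨_, symmGen_contextStep_sylvBase_iff.2 ⟨i, pb, hmove, rfl⟩,
    std_permute_swap hmove.succ_lt_length hmove.letter_ne⟩

end SylvesterMoves

theorem sylv_isPhiCongruence_std : IsPhiCongruence std sylv := by
  intro u v
  refine ⟨fun h => ⟨?_, h.ev_eq⟩, fun ⟨hstd, hev⟩ => ?_⟩
  · rw [sylv, congClosure_iff_reflTransGen] at h ⊢
    exact ReflTransGen.lift std (fun _ _ => symmGen_contextStep_sylvBase_std) _ _ h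
  · rw [sylv, congClosure_iff_reflTransGen] at hstd
    obtain ⟨v', hv', hstd'⟩ :=
      hstd.exists_lift std fun _ _ => exists_symmGen_contextStep_sylvBase_std_eq
    have huv' : sylv u v' := congClosure_iff_reflTransGen.2 hv'
    rwa [std_injective_of_ev_eq hstd' (huv'.ev_eq.symm.trans hev)] at huv'

theorem sylv_is_stdGood :
    IsCongruence sylv ∧ IsPhiCongruence std sylv ∧ CompatRestrict sylv :=
  ⟨isCongruence_congClosure sylvBase, sylv_isPhiCongruence_std,
    fun _ hI _ _ => sylv.restrictTo hI⟩
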